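/- Let y be a B-valued circular element with cumulants β_{(1,2)}, β_{(2,1)}, and define H(n,b,k)=E((y*y)^n b (y*y)^k) and H'(n,b,k)=E((yy*)^n y b y* (yy*)^k) for n,k≥0, b∈B. Then H(0,b,k)=b g_2(k), H'(0,b,k)=Σ_{j=0}^k β_{(1,2)}(b g_2(j)) g_1(k−j), and for n≥1: H(n,b,k) = Σ_{i=1}^n β_{(2,1)}(g_1(i−1)) H(n−i,b,k) + Σ_{j=1}^k β_{(2,1)}(H'(n−1,b,j−1)) g_2(k−j), and H'(n,b,k) = Σ_{i=1}^n β_{(1,2)}(g_2(i−1)) H'(n−i,b,k) + Σ_{j=0}^k β_{(1,2)}(H(n,b,j)) g_1(k−j), where g_1(n)=E((yy*)^n), g_2(n)=E((y*y)^n). -/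
import Mathlib

set_option linter.unusedSectionVars false
set_option maxHeartbeats 1000000


open scoped BigOperators

/-- The word `y^{ε(1)} b₁ ⋯ y^{ε(n)} bₙ` encoded by a list of pairs
`(ε(j), bⱼ)`, where `true` stands for `y` and `false` for `y*`. -/
noncomputable def cword {A : Type*} [Monoid A] [StarMul A]
    (y : A) (l : List (Bool × A)) : A :=
  (l.map fun p => (if p.1 then y else star y) * p.2).prod

/-- `y` is B-valued circular with second-order cumulant maps
`β true = β_{(1,2)}`, `β false = β_{(2,1)}`. -/
def IsCircularWith {A : Type*} [Ring A] [StarRing A] [Algebra ℂ A] [StarModule ℂ A]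
    (B : StarSubalgebra ℂ A) (E : A →ₗ[ℂ] A)
    (y : A) (β : Bool → A →ₗ[ℂ] A) : Prop :=
  ∀ (ε : Bool) (b : A), b ∈ B → ∀ l : List (Bool × A), (∀ q ∈ l, q.2 ∈ B) →
    E (cword y ((ε, b) :: l)) =
      ∑ j : Fin l.length,
        if (l.get j).1 ≠ ε then
          β ε (b * E (cword y (l.take (j : ℕ)))) * (l.get j).2 *
            E (cword y (l.drop ((j : ℕ) + 1)))
        else 0

section ListAux
variable {α : Type*}

lemma CircAux.getD_mid (P Q : List α) (x d : α) : (P ++ x :: Q).getD P.length d = x := by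
  rw [List.getD_eq_getElem]
  · simp [List.getElem_append_right]
  · simp

lemma CircAux.drop_mid (P Q : List α) (x : α) : (P ++ x :: Q).drop (P.length + 1) = Q := by
  rw [show P ++ x :: Q = (P ++ [x]) ++ Q by simp, List.drop_left']
  simp

/-- alternating list predicate on first components -/
def CircAux.IsAlt : Bool → List (Bool × α) → Prop
  | _, [] => True
  | c, x :: l => x.1 = c ∧ CircAux.IsAlt (!c) l

lemma CircAux.isAlt_getD (d : Bool × α) :
    ∀ (l : List (Bool × α)) (c : Bool), CircAux.IsAlt c l → ∀ m, m < l.length →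
      (l.getD m d).1 = if m % 2 = 0 then c else !c := by
  intro l
  induction l with
  | nil => intro c _ m hm; simp at hm
  | cons x l ih =>
    intro c hc m hm
    rcases m with _ | m
    · simpa using hc.1
    · have := ih (!c) hc.2 m (by simpa using hm)
      simp only [List.getD_cons_succ, this]
      rcases Nat.even_or_odd m with h | h
      · have h1 : m % 2 = 0 := Nat.even_iff.1 h
        have h2 : (m + 1) % 2 = 1 := by omega
        simp [h1, h2]
      · have h1 : m % 2 = 1 := Nat.odd_iff.1 h
        have h2 : (m + 1) % 2 = 0 := by omega
        simp [h1, h2]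

end ListAux

section Sums
variable {M : Type*} [AddCommMonoid M]

lemma CircAux.sum_even_odd (N : ℕ) (G : ℕ → M) :
    ∑ m ∈ Finset.range (2 * N), G m = ∑ i ∈ Finset.range N, (G (2 * i) + G (2 * i + 1)) := by
  induction N with
  | zero => simp
  | succ N ih =>
    rw [Finset.sum_range_succ, ← ih, show 2 * (N + 1) = 2 * N + 1 + 1 by ring,
      Finset.sum_range_succ, Finset.sum_range_succ, add_assoc]

lemma CircAux.sum_even_odd' (N : ℕ) (G : ℕ → M) :
    ∑ m ∈ Finset.range (2 * N + 1), G m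
      = (∑ i ∈ Finset.range (N + 1), G (2 * i)) + ∑ i ∈ Finset.range N, G (2 * i + 1) := by
  rw [Finset.sum_range_succ, CircAux.sum_even_odd, Finset.sum_add_distrib,
    Finset.sum_range_succ, add_right_comm]

lemma CircAux.sum_range_add' (f : ℕ → M) (m n : ℕ) :
    ∑ i ∈ Finset.range (m + n), f i
      = (∑ i ∈ Finset.range m, f i) + ∑ j ∈ Finset.range n, f (m + j) := by
  induction n with
  | zero => simp
  | succ n ih => rw [show m + (n + 1) = (m + n) + 1 by omega, Finset.sum_range_succ, ih,
      Finset.sum_range_succ, add_assoc]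

end Sums

namespace CircAux

variable {A : Type*} [Monoid A] [StarMul A] (y : A)

/-- `((true,1)(false,1))^m`, the word `(y y*)^m`. -/
def rTF : ℕ → List (Bool × A)
  | 0 => []
  | m + 1 => (true, 1) :: (false, 1) :: rTF m

@[simp] lemma cword_nil : cword y ([] : List (Bool × A)) = 1 := rfl

@[simp] lemma cword_cons_t (c : A) (l) : cword y ((true, c) :: l) = y * c * cword y l := by
  simp [cword, mul_assoc]

@[simp] lemma cword_cons_f (c : A) (l) : cword y ((false, c) :: l) = star y * c * cword y l := by
  simp [cword, mul_assoc]

@[simp] lemma cword_append (l₁ l₂ : List (Bool × A)) :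
    cword y (l₁ ++ l₂) = cword y l₁ * cword y l₂ := by
  simp [cword]

@[simp] lemma length_rTF (m : ℕ) : (rTF (A := A) m).length = 2 * m := by
  induction m with
  | zero => rfl
  | succ m ih => simp [rTF, ih]; omega

lemma mem_rTF (q : Bool × A) (m : ℕ) (h : q ∈ rTF (A := A) m) : q.2 = 1 := by
  induction m with
  | zero => simp [rTF] at h
  | succ m ih =>
    simp [rTF] at h
    rcases h with h | h | h <;> first | (subst h; rfl) | exact ih h

lemma rTF_add (a b : ℕ) : rTF (A := A) (a + b) = rTF a ++ rTF b := by
  induction a with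
  | zero => simp [rTF]
  | succ a ih => rw [show a + 1 + b = (a + b) + 1 by omega]; simp [rTF, ih]

lemma rTF_split {j k : ℕ} (h : j < k) :
    rTF (A := A) k = rTF j ++ (true, 1) :: (false, 1) :: rTF (k - 1 - j) := by
  conv_lhs => rw [show k = j + (k - 1 - j + 1) by omega]
  rw [rTF_add]
  congr 2

lemma cword_rTF (m : ℕ) : cword y (rTF m) = (y * star y) ^ m := by
  induction m with
  | zero => simp [rTF]
  | succ m ih => simp [rTF, ih, pow_succ', mul_assoc]

lemma shiftFT (m : ℕ) (c : A) :
    (star y * y) ^ m * (star y * c) = star y * ((y * star y) ^ m * c) := by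
  induction m generalizing c with
  | zero => simp
  | succ m ih =>
    rw [pow_succ', mul_assoc, ih]
    simp [pow_succ', mul_assoc]

lemma shiftTF (m : ℕ) (c : A) :
    (y * star y) ^ m * (y * c) = y * ((star y * y) ^ m * c) := by
  induction m generalizing c with
  | zero => simp
  | succ m ih =>
    rw [pow_succ', mul_assoc, ih]
    simp [pow_succ', mul_assoc]

lemma shiftFT' (m : ℕ) : (star y * y) ^ m * star y = star y * (y * star y) ^ m := by
  simpa using shiftFT y m 1

lemma shiftTF' (m : ℕ) : (y * star y) ^ m * y = y * (star y * y) ^ m := by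
  simpa using shiftTF y m 1

lemma isAlt_rTF (m : ℕ) : IsAlt true (rTF (A := A) m) := by
  induction m with
  | zero => trivial
  | succ m ih => exact ⟨rfl, rfl, ih⟩

lemma isAlt_rTF_append (m : ℕ) (l : List (Bool × A)) (h : IsAlt true l) :
    IsAlt true (rTF m ++ l) := by
  induction m with
  | zero => simpa [rTF]
  | succ m ih => exact ⟨rfl, rfl, ih⟩

/-- `((false,1)(true,1))^m`, the word `(y* y)^m`. -/
def rFT : ℕ → List (Bool × A)
  | 0 => []
  | m + 1 => (false, 1) :: (true, 1) :: rFT m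

@[simp] lemma length_rFT (m : ℕ) : (rFT (A := A) m).length = 2 * m := by
  induction m with
  | zero => rfl
  | succ m ih => simp [rFT, ih]; omega

lemma mem_rFT (q : Bool × A) (m : ℕ) (h : q ∈ rFT (A := A) m) : q.2 = 1 := by
  induction m with
  | zero => simp [rFT] at h
  | succ m ih =>
    simp [rFT] at h
    rcases h with h | h | h <;> first | (subst h; rfl) | exact ih h

lemma rFT_add (a b : ℕ) : rFT (A := A) (a + b) = rFT a ++ rFT b := by
  induction a with
  | zero => simp [rFT]
  | succ a ih => rw [show a + 1 + b = (a + b) + 1 by omega]; simp [rFT, ih]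

lemma rFT_split {j k : ℕ} (h : j < k) :
    rFT (A := A) k = rFT j ++ (false, 1) :: (true, 1) :: rFT (k - 1 - j) := by
  conv_lhs => rw [show k = j + (k - 1 - j + 1) by omega]
  rw [rFT_add]
  congr 2

lemma cword_rFT (m : ℕ) : cword y (rFT m) = (star y * y) ^ m := by
  induction m with
  | zero => simp [rFT]
  | succ m ih => simp [rFT, ih, pow_succ', mul_assoc]

lemma isAlt_rFT (m : ℕ) : IsAlt false (rFT (A := A) m) := by
  induction m with
  | zero => trivial
  | succ m ih => exact ⟨rfl, rfl, ih⟩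

end CircAux

open CircAux

/-- Recursions for `H(n,b,k) = E((y*y)ⁿ b (y*y)ᵏ)` and
`H'(n,b,k) = E((yy*)ⁿ y b y* (yy*)ᵏ)` for a B-valued circular element `y`. -/
theorem circular_H_recursions
    {A : Type*} [Ring A] [StarRing A] [Algebra ℂ A] [StarModule ℂ A]
    (B : StarSubalgebra ℂ A) (E : A →ₗ[ℂ] A)
    (hErange : ∀ a : A, E a ∈ B)
    (hEid : ∀ b ∈ B, E b = b)
    (hEstar : ∀ a : A, E (star a) = star (E a))
    (hEbimod : ∀ a : A, ∀ b₁ ∈ B, ∀ b₂ ∈ B, E (b₁ * a * b₂) = b₁ * E a * b₂)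
    (y : A) (β : Bool → A →ₗ[ℂ] A)
    (hcirc : IsCircularWith B E y β)
    (g₁ g₂ : ℕ → A)
    (hg₁ : ∀ n, g₁ n = E ((y * star y) ^ n))
    (hg₂ : ∀ n, g₂ n = E ((star y * y) ^ n))
    (H H' : ℕ → A → ℕ → A)
    (hH : ∀ n b k, H n b k = E ((star y * y) ^ n * b * (star y * y) ^ k))
    (hH' : ∀ n b k, H' n b k = E ((y * star y) ^ n * y * b * star y * (y * star y) ^ k)) :
    ∀ b ∈ B, ∀ k : ℕ,
      H 0 b k = b * g₂ k ∧
      H' 0 b k = ∑ j ∈ Finset.range (k + 1), β true (b * g₂ j) * g₁ (k - j) ∧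
      ∀ n : ℕ, 1 ≤ n →
        (H n b k = (∑ i ∈ Finset.range n, β false (g₁ i) * H (n - 1 - i) b k)
            + ∑ j ∈ Finset.range k, β false (H' (n - 1) b j) * g₂ (k - 1 - j)) ∧
        (H' n b k = (∑ i ∈ Finset.range n, β true (g₂ i) * H' (n - 1 - i) b k)
            + ∑ j ∈ Finset.range (k + 1), β true (H n b j) * g₁ (k - j)) := by
  intro b hb
  have h1B : (1 : A) ∈ B := one_mem B
  have hE1 : E 1 = 1 := hEid 1 h1B
  -- moment formula in `range`/`getD` form
  have hcirc' : ∀ (ε : Bool) (c : A), c ∈ B → ∀ l : List (Bool × A), (∀ q ∈ l, q.2 ∈ B) →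
      E (cword y ((ε, c) :: l)) = ∑ m ∈ Finset.range l.length,
        (if (l.getD m (true, 1)).1 ≠ ε then
          β ε (c * E (cword y (l.take m))) * (l.getD m (true, 1)).2 *
            E (cword y (l.drop (m + 1)))
        else 0) := by
    intro ε c hc l hl
    rw [hcirc ε c hc l hl, ← Fin.sum_univ_eq_sum_range (fun m =>
      if (l.getD m (true, 1)).1 ≠ ε then
        β ε (c * E (cword y (l.take m))) * (l.getD m (true, 1)).2 *
          E (cword y (l.drop (m + 1)))
      else 0) l.length]
    refine Finset.sum_congr rfl fun j _ => ?_
    simp only [List.getD_eq_getElem l _ j.isLt, List.get_eq_getElem]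
  -- evaluating one term of the sum via a decomposition of the list
  have key : ∀ (ε : Bool) (c : A) (P Q : List (Bool × A)) (x : Bool × A) (m : ℕ),
      m = P.length →
      (if ((P ++ x :: Q).getD m (true, 1)).1 ≠ ε then
          β ε (c * E (cword y ((P ++ x :: Q).take m))) * ((P ++ x :: Q).getD m (true, 1)).2 *
            E (cword y ((P ++ x :: Q).drop (m + 1)))
        else 0)
      = if x.1 ≠ ε then β ε (c * E (cword y P)) * x.2 * E (cword y Q) else 0 := by
    intro ε c P Q x m hm; subst hm
    rw [getD_mid, List.take_left, drop_mid]
  -- part 1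
  have hg₂zero : g₂ 0 = 1 := by rw [hg₂, pow_zero, hE1]
  have part1 : ∀ k, H 0 b k = b * g₂ k := by
    intro k
    rw [hH, pow_zero, one_mul]
    calc E (b * (star y * y) ^ k) = E (b * (star y * y) ^ k * 1) := by rw [mul_one]
      _ = b * E ((star y * y) ^ k) * 1 := hEbimod _ b hb 1 h1B
      _ = b * g₂ k := by rw [mul_one, hg₂]
  -- part 2
  have part2 : ∀ k, H' 0 b k = ∑ j ∈ Finset.range (k + 1), β true (b * g₂ j) * g₁ (k - j) := by
    intro k
    have hg₂0 : g₂ 0 = 1 := by rw [hg₂, pow_zero, hE1]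
    have hword : H' 0 b k = E (cword y ((true, b) :: ((false, 1) :: rTF k))) := by
      rw [hH']; congr 1
      simp [cword_rTF, mul_assoc]
    have hmem : ∀ q ∈ ((false, 1) :: rTF (A := A) k), q.2 ∈ B := by
      intro q hq
      rcases List.mem_cons.1 hq with h | h
      · rw [h]; exact h1B
      · rw [mem_rTF q k h]; exact h1B
    have hIsAlt : IsAlt false ((false, 1) :: rTF (A := A) k) := ⟨rfl, isAlt_rTF k⟩
    rw [hword, hcirc' true b hb _ hmem,
      show ((false, 1) :: rTF (A := A) k).length = 2 * k + 1 by simp, sum_even_odd']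
    beta_reduce
    refine Eq.trans (congrArg₂ (· + ·) (Finset.sum_congr rfl fun j hj => ?_)
      (Finset.sum_eq_zero fun i hi => ?_)) (add_zero _)
    · -- even terms
      rcases Nat.eq_zero_or_pos j with rfl | hj'
      · simp only [Nat.mul_zero, List.getD_cons_zero, List.take_zero, List.drop_succ_cons,
          List.drop_zero]
        rw [if_pos (by simp), cword_nil, hE1, mul_one, cword_rTF, ← hg₁, hg₂0, mul_one]
        simp
      · obtain ⟨j', rfl⟩ : ∃ j', j = j' + 1 := ⟨j - 1, by omega⟩
        have hjk : j' < k := by have := Finset.mem_range.1 hj; omega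
        have hdec : ((false, 1) :: rTF (A := A) k)
            = ((false, 1) :: rTF j' ++ [(true, 1)]) ++ (false, 1) :: rTF (k - (j' + 1)) := by
          rw [rTF_split hjk, show k - 1 - j' = k - (j' + 1) by omega]
          simp
        rw [hdec, key true b _ _ _ (2 * (j' + 1)) (by simp; omega), if_pos (by simp)]
        have e1 : cword y ((false, 1) :: rTF (A := A) j' ++ [(true, 1)])
            = (star y * y) ^ (j' + 1) := by
          simp [cword_rTF, pow_succ', mul_assoc, shiftTF, shiftTF']
        rw [e1, ← hg₂, cword_rTF, ← hg₁, mul_one]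
    · -- odd terms vanish
      have hik : i < k := Finset.mem_range.1 hi
      have hi' : 2 * i + 1 < ((false, 1) :: rTF (A := A) k).length := by simp; omega
      rw [isAlt_getD _ _ _ hIsAlt _ hi']
      have : (2 * i + 1) % 2 = 1 := by omega
      simp [this]
  -- H recursion
  have PH : ∀ n k : ℕ, 1 ≤ n →
      H n b k = (∑ i ∈ Finset.range n, β false (g₁ i) * H (n - 1 - i) b k)
        + ∑ j ∈ Finset.range k, β false (H' (n - 1) b j) * g₂ (k - 1 - j) := by
    intro n k hn
    obtain ⟨m, rfl⟩ : ∃ m, n = m + 1 := ⟨n - 1, by omega⟩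
    simp only [Nat.add_sub_cancel]
    have hword : H (m + 1) b k = E (cword y ((false, 1) :: (rTF m ++ (true, b) :: rFT k))) := by
      rw [hH]; congr 1
      simp [cword_rTF, cword_rFT, pow_succ', mul_assoc, shiftTF]
    have hmem : ∀ q ∈ (rTF (A := A) m ++ (true, b) :: rFT k), q.2 ∈ B := by
      intro q hq
      rcases List.mem_append.1 hq with h | h
      · rw [mem_rTF q m h]; exact h1B
      · rcases List.mem_cons.1 h with h | h
        · rw [h]; exact hb
        · rw [mem_rFT q k h]; exact h1B
    have hIsAlt : IsAlt true (rTF (A := A) m ++ (true, b) :: rFT k) :=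
      isAlt_rTF_append m _ ⟨rfl, isAlt_rFT k⟩
    rw [hword, hcirc' false 1 h1B _ hmem,
      show (rTF (A := A) m ++ (true, b) :: rFT k).length = 2 * (m + k) + 1 by simp; omega,
      sum_even_odd']
    refine Eq.trans (congrArg₂ (· + ·) ?_ (Finset.sum_eq_zero fun i hi => ?_)) (add_zero _)
    · -- even part
      rw [show m + k + 1 = m + 1 + k by omega, sum_range_add']
      congr 1
      · refine Finset.sum_congr rfl fun i hi => ?_
        have him : i < m + 1 := Finset.mem_range.1 hi
        rcases Nat.lt_or_ge i m with hlt | hge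
        · -- i < m
          have hdec : (rTF (A := A) m ++ (true, b) :: rFT k)
              = rTF i ++ (true, 1) :: ((false, 1) :: (rTF (m - 1 - i) ++ (true, b) :: rFT k)) := by
            rw [rTF_split hlt]; simp
          rw [hdec, key false 1 _ _ _ (2 * i) (by simp), if_pos (by simp), one_mul,
            cword_rTF, ← hg₁, mul_one]
          congr 1
          rw [hH, show m - i = (m - 1 - i) + 1 by omega]
          congr 1
          simp [cword_rTF, cword_rFT, pow_succ', mul_assoc, shiftTF]
        · -- i = m
          rw [key false 1 (rTF m) (rFT k) (true, b) (2 * i) (by simp; omega),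
            if_pos (by simp), one_mul, cword_rTF, ← hg₁, cword_rFT, ← hg₂,
            show m - i = 0 by omega, show i = m by omega, part1, mul_assoc]
      · refine Finset.sum_congr rfl fun j hj => ?_
        have hjk : j < k := Finset.mem_range.1 hj
        have hdec : (rTF (A := A) m ++ (true, b) :: rFT k)
            = (rTF m ++ (true, b) :: (rFT j ++ [(false, 1)])) ++ (true, 1) :: rFT (k - 1 - j) := by
          rw [rFT_split hjk]; simp
        rw [hdec, key false 1 _ _ _ (2 * (m + 1 + j)) (by simp; omega), if_pos (by simp),
          one_mul, mul_one, cword_rFT, ← hg₂]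
        congr 2
        rw [hH']
        congr 1
        simp [cword_rTF, cword_rFT, mul_assoc, shiftFT']
    · -- odd terms vanish
      have hik : i < m + k := Finset.mem_range.1 hi
      have hi' : 2 * i + 1 < (rTF (A := A) m ++ (true, b) :: rFT k).length := by simp; omega
      rw [isAlt_getD _ _ _ hIsAlt _ hi']
      have h2 : (2 * i + 1) % 2 = 1 := by omega
      simp [h2]
  -- H' recursion
  have PH' : ∀ n k : ℕ, 1 ≤ n →
      H' n b k = (∑ i ∈ Finset.range n, β true (g₂ i) * H' (n - 1 - i) b k)
        + ∑ j ∈ Finset.range (k + 1), β true (H n b j) * g₁ (k - j) := by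
    intro n k hn
    obtain ⟨m, rfl⟩ : ∃ m, n = m + 1 := ⟨n - 1, by omega⟩
    simp only [Nat.add_sub_cancel]
    have hword : H' (m + 1) b k
        = E (cword y ((true, 1) :: ((false, 1)
            :: (rTF m ++ (true, b) :: (false, 1) :: rTF k)))) := by
      rw [hH']; congr 1
      simp [cword_rTF, pow_succ', mul_assoc, shiftTF]
    have hmem : ∀ q ∈ ((false, 1) :: (rTF (A := A) m ++ (true, b) :: (false, 1) :: rTF k)),
        q.2 ∈ B := by
      intro q hq
      rcases List.mem_cons.1 hq with h | h
      · rw [h]; exact h1B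
      rcases List.mem_append.1 h with h | h
      · rw [mem_rTF q m h]; exact h1B
      rcases List.mem_cons.1 h with h | h
      · rw [h]; exact hb
      rcases List.mem_cons.1 h with h | h
      · rw [h]; exact h1B
      · rw [mem_rTF q k h]; exact h1B
    have hIsAlt : IsAlt false ((false, 1) :: (rTF (A := A) m ++ (true, b) :: (false, 1) :: rTF k)) :=
      ⟨rfl, isAlt_rTF_append m _ ⟨rfl, rfl, isAlt_rTF k⟩⟩
    rw [hword, hcirc' true 1 h1B _ hmem,
      show ((false, 1) :: (rTF (A := A) m ++ (true, b) :: (false, 1) :: rTF k)).length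
        = 2 * (m + k + 1) + 1 by simp; omega,
      sum_even_odd']
    refine Eq.trans (congrArg₂ (· + ·) ?_ (Finset.sum_eq_zero fun i hi => ?_)) (add_zero _)
    · -- even part
      rw [show m + k + 1 + 1 = m + 1 + (k + 1) by omega, sum_range_add']
      congr 1
      · refine Finset.sum_congr rfl fun i hi => ?_
        have him : i < m + 1 := Finset.mem_range.1 hi
        rcases Nat.eq_zero_or_pos i with rfl | hi0
        · -- i = 0
          simp only [Nat.mul_zero, List.getD_cons_zero, List.take_zero, List.drop_succ_cons,
            List.drop_zero]
          rw [if_pos (by simp), cword_nil, hE1, mul_one, mul_one, hg₂zero, Nat.sub_zero]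
          congr 1
          rw [hH']
          congr 1
          simp [cword_rTF, mul_assoc, shiftTF]
        · -- 1 ≤ i ≤ m
          obtain ⟨i', rfl⟩ : ∃ i', i = i' + 1 := ⟨i - 1, by omega⟩
          have hdec : ((false, 1) :: (rTF (A := A) m ++ (true, b) :: (false, 1) :: rTF k))
              = ((false, 1) :: rTF i' ++ [(true, 1)])
                ++ (false, 1) :: (rTF (m - (i' + 1)) ++ (true, b) :: (false, 1) :: rTF k) := by
            rw [rTF_split (show i' < m by omega), show m - 1 - i' = m - (i' + 1) by omega]
            simp
          rw [hdec, key true 1 _ _ _ (2 * (i' + 1)) (by simp; omega), if_pos (by simp),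
            one_mul, mul_one]
          have e1 : cword y ((false, 1) :: rTF (A := A) i' ++ [(true, 1)])
              = (star y * y) ^ (i' + 1) := by
            simp [cword_rTF, pow_succ', mul_assoc, shiftTF, shiftTF']
          rw [e1, ← hg₂]
          congr 1
          rw [hH']
          congr 1
          simp [cword_rTF, mul_assoc, shiftTF]
      · refine Finset.sum_congr rfl fun j hj => ?_
        have hjk : j < k + 1 := Finset.mem_range.1 hj
        rcases Nat.eq_zero_or_pos j with rfl | hj0
        · -- j = 0
          have hdec : ((false, 1) :: (rTF (A := A) m ++ (true, b) :: (false, 1) :: rTF k))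
              = ((false, 1) :: rTF m ++ [(true, b)]) ++ (false, 1) :: rTF k := by
            simp
          rw [hdec, key true 1 _ _ _ (2 * (m + 1 + 0)) (by simp; omega), if_pos (by simp),
            one_mul, mul_one, cword_rTF, ← hg₁]
          simp only [Nat.sub_zero]
          congr 2
          rw [hH]
          congr 1
          simp [cword_rTF, pow_succ', mul_assoc, shiftTF]
        · -- 1 ≤ j ≤ k
          obtain ⟨j', rfl⟩ : ∃ j', j = j' + 1 := ⟨j - 1, by omega⟩
          have hdec : ((false, 1) :: (rTF (A := A) m ++ (true, b) :: (false, 1) :: rTF k))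
              = ((false, 1) :: rTF m ++ (true, b) :: ((false, 1) :: rTF j' ++ [(true, 1)]))
                ++ (false, 1) :: rTF (k - (j' + 1)) := by
            rw [rTF_split (show j' < k by omega), show k - 1 - j' = k - (j' + 1) by omega]
            simp
          rw [hdec, key true 1 _ _ _ (2 * (m + 1 + (j' + 1))) (by simp; omega),
            if_pos (by simp), one_mul, mul_one, cword_rTF, ← hg₁]
          congr 2
          rw [hH]
          congr 1
          simp [cword_rTF, pow_succ', mul_assoc, shiftTF, shiftTF']
    · -- odd terms vanish
      have hik : i < m + k + 1 := Finset.mem_range.1 hi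
      have hi' : 2 * i + 1
          < ((false, 1) :: (rTF (A := A) m ++ (true, b) :: (false, 1) :: rTF k)).length := by
        simp; omega
      rw [isAlt_getD _ _ _ hIsAlt _ hi']
      have h2 : (2 * i + 1) % 2 = 1 := by omega
      simp [h2]
  intro k
  exact ⟨part1 k, part2 k, fun n hn => ⟨PH n k hn, PH' n k hn⟩⟩
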